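/- arXiv:0907.5261 — 3 statements merged into one kernel-verified Lean document; each statement's English description precedes it below -/
import Mathlib

section
/- Let n ≥ 3 and let C ∈ ℤ[X_1,…,X_n] be a cubic form with coefficients of maximum absolute value M ≥ 1. Then there exists a unimodular integer linear change of variables taking C to a cubic form C' with ‖C'‖ ≤ c·M (for an absolute constant c) such that, after possibly replacing C' by -C', the coefficient of X_1^3 in C' is positive and at least c'·M for an absolute constant c' > 0. -/
/-!
Call `e_i + b e_j + c e_k`, with `i, j, k` distinct and `|b|, |c| ≤ 1`, a test vector. Restricting
a cubic form `C` to three coordinates and polarizing gives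
`C(e_i) = c_{iii}`, `C(e_i + e_j) - C(e_i - e_j) - 2 C(e_j) = 2 c_{iij}` and
`∑ ±C(e_i ± e_j ± e_k) = 4 c_{ijk}`, so every coefficient of `C` is at most twice the largest
value of `|C|` at a test vector. In particular `2 |C(v)| ≥ M` for some test vector `v`.
Since `v_i = 1`, `v` is the first column of a unimodular `U` whose columns have `ℓ¹`-norm at
most `3`. The leading coefficient of `C ∘ U` is `C(v)`, and the values of `C ∘ U` at test
vectors are values of `C` at vectors of `ℓ¹`-norm at most `9`, hence at most `9³ M`; by the same
polarization the coefficients of `C ∘ U` are at most `2 · 9³ M`.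
-/

open MvPolynomial Finset Matrix

section Expansion

variable {σ R : Type*} [DecidableEq σ]

theorem Finset.sum_finsuppAntidiag_insert {M : Type*} [AddCommMonoid M] {a : σ} {s : Finset σ}
    (ha : a ∉ s) (n : ℕ) (g : (σ →₀ ℕ) → M) :
    ∑ d ∈ (insert a s).finsuppAntidiag n, g d =
      ∑ p ∈ antidiagonal n, ∑ d ∈ s.finsuppAntidiag p.2, g (Finsupp.single a p.1 + d) := by
  rw [finsuppAntidiag_insert ha, sum_biUnion]
  · refine sum_congr rfl fun p _ => ?_
    rw [sum_map, ← sum_attach (s.finsuppAntidiag p.2)]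
    refine sum_congr rfl fun d _ => ?_
    have hda : d.1 a = 0 :=
      Finsupp.notMem_support_iff.mp fun h => ha ((mem_finsuppAntidiag.mp d.2).2 h)
    simp [Finsupp.update_eq_erase_add_single, Finsupp.erase_of_notMem_support, hda, add_comm]
  · intro p hp q hq hpq
    refine disjoint_left.mpr fun f hfp hfq => hpq ?_
    simp only [mem_map, mem_attach, true_and] at hfp hfq
    obtain ⟨d, rfl⟩ := hfp
    obtain ⟨e, he⟩ := hfq
    have h1 : q.1 = p.1 := by
      have := DFunLike.congr_fun he a
      change Finsupp.update e.1 a q.1 a = Finsupp.update d.1 a p.1 a at this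
      simpa using this
    rw [mem_coe, HasAntidiagonal.mem_antidiagonal] at hp hq
    exact Prod.ext h1.symm (by omega)

theorem Finset.finsuppAntidiag_singleton (a : σ) (n : ℕ) :
    ({a} : Finset σ).finsuppAntidiag n = {Finsupp.single a n} := by
  ext d
  rw [mem_finsuppAntidiag, mem_singleton, sum_singleton, Finsupp.support_subset_singleton']
  constructor
  · rintro ⟨rfl, b, rfl⟩
    simp
  · rintro rfl
    simp

namespace MvPolynomial.IsHomogeneous

variable [CommRing R] {F : MvPolynomial σ R}

theorem eval_eq_sum_finsuppAntidiag {m : ℕ} (hF : F.IsHomogeneous m) {s : Finset σ}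
    {x : σ → R} (hx : ∀ t ∉ s, x t = 0) :
    eval x F = ∑ d ∈ s.finsuppAntidiag m, coeff d F * ∏ t ∈ s, x t ^ d t := by
  set f : (σ →₀ ℕ) → R := fun d => coeff d F * ∏ t ∈ d.support, x t ^ d t
  have hA : ∀ d ∈ F.support, d ∉ s.finsuppAntidiag m → f d = 0 := by
    intro d hd hdA
    obtain ⟨t, ht, hts⟩ := not_subset.mp fun hs => hdA <| mem_finsuppAntidiag.mpr
      ⟨by rw [hF.degree_eq_sum_deg_support hd, sum_subset hs fun t _ ht =>
        Finsupp.notMem_support_iff.mp ht], hs⟩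
    simp only [f]
    rw [prod_eq_zero ht (by rw [hx t hts, zero_pow (Finsupp.mem_support_iff.mp ht)]), mul_zero]
  calc eval x F = ∑ d ∈ F.support, f d := eval_eq x F
    _ = ∑ d ∈ F.support ∩ s.finsuppAntidiag m, f d :=
      (sum_subset inter_subset_left fun d hd hd' =>
        hA d hd fun h => hd' (mem_inter.mpr ⟨hd, h⟩)).symm
    _ = ∑ d ∈ s.finsuppAntidiag m, f d :=
      sum_subset inter_subset_right fun d hd hd' => by
        simp [f, notMem_support_iff.mp fun h => hd' (mem_inter.mpr ⟨h, hd⟩)]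
    _ = _ := sum_congr rfl fun d hd => by
        simp only [f]
        refine congrArg _ (prod_subset (mem_finsuppAntidiag.mp hd).2 fun t _ ht => ?_)
        rw [Finsupp.notMem_support_iff.mp ht, pow_zero]

theorem eval_piSingle {m : ℕ} (hF : F.IsHomogeneous m) (i : σ) (a : R) :
    eval (Pi.single i a) F = coeff (Finsupp.single i m) F * a ^ m := by
  rw [hF.eval_eq_sum_finsuppAntidiag (s := {i}) fun t ht => by simp_all]
  simp [finsuppAntidiag_singleton]

theorem eval_piSingle_add_piSingle {m : ℕ} (hF : F.IsHomogeneous m) {i j : σ} (hij : i ≠ j)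
    (a b : R) :
    eval (Pi.single i a + Pi.single j b) F = ∑ p ∈ antidiagonal m,
      coeff (Finsupp.single i p.1 + Finsupp.single j p.2) F * (a ^ p.1 * b ^ p.2) := by
  rw [hF.eval_eq_sum_finsuppAntidiag (s := {i, j}) fun t ht => by simp_all]
  simp [sum_finsuppAntidiag_insert, finsuppAntidiag_singleton, hij]

theorem eval_piSingle_add_piSingle_add_piSingle {m : ℕ} (hF : F.IsHomogeneous m) {i j k : σ}
    (hij : i ≠ j) (hik : i ≠ k) (hjk : j ≠ k) (a b c : R) :
    eval (Pi.single i a + Pi.single j b + Pi.single k c) F = ∑ p ∈ antidiagonal m,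
      ∑ q ∈ antidiagonal p.2, coeff (Finsupp.single i p.1 + Finsupp.single j q.1 +
        Finsupp.single k q.2) F * (a ^ p.1 * b ^ q.1 * c ^ q.2) := by
  rw [hF.eval_eq_sum_finsuppAntidiag (s := {i, j, k}) fun t ht => by simp_all]
  simp [sum_finsuppAntidiag_insert, finsuppAntidiag_singleton, hij, hik, hjk, ← add_assoc,
    mul_assoc]

theorem two_mul_coeff_sq_mul (hF : F.IsHomogeneous 3) {i j : σ} (hij : i ≠ j) :
    2 * coeff (Finsupp.single i 2 + Finsupp.single j 1) F =
      eval (Pi.single i 1 + Pi.single j 1) F - eval (Pi.single i 1 + Pi.single j (-1)) F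
        - 2 * eval (Pi.single j 1) F := by
  simp [hF.eval_piSingle_add_piSingle hij, hF.eval_piSingle, Finset.Nat.sum_antidiagonal_succ,
    -Finsupp.single_add]
  ring

theorem four_mul_coeff_mul_mul (hF : F.IsHomogeneous 3) {i j k : σ} (hij : i ≠ j) (hik : i ≠ k)
    (hjk : j ≠ k) :
    4 * coeff (Finsupp.single i 1 + Finsupp.single j 1 + Finsupp.single k 1) F =
      eval (Pi.single i 1 + Pi.single j 1 + Pi.single k 1) F
        - eval (Pi.single i 1 + Pi.single j 1 + Pi.single k (-1)) F
        - eval (Pi.single i 1 + Pi.single j (-1) + Pi.single k 1) F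
        + eval (Pi.single i 1 + Pi.single j (-1) + Pi.single k (-1)) F := by
  simp [hF.eval_piSingle_add_piSingle_add_piSingle hij hik hjk, Finset.Nat.sum_antidiagonal_succ,
    -Finsupp.single_add]
  ring

end MvPolynomial.IsHomogeneous

end Expansion

section AbsBounds

variable {σ R : Type*} [CommRing R] [LinearOrder R] [IsStrictOrderedRing R]

theorem Finset.sum_finsuppAntidiag_prod_pow_le [DecidableEq σ] (s : Finset σ) (n : ℕ)
    {y : σ → R} (hy : ∀ t, 0 ≤ y t) :
    ∑ d ∈ s.finsuppAntidiag n, ∏ t ∈ s, y t ^ d t ≤ (∑ t ∈ s, y t) ^ n := by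
  rw [sum_pow_eq_sum_piAntidiag, finsuppAntidiag, sum_map]
  refine (sum_attach (s.piAntidiag n) fun f => ∏ t ∈ s, y t ^ f t).le.trans
    (sum_le_sum fun f _ => ?_)
  exact le_mul_of_one_le_left (prod_nonneg fun t _ => pow_nonneg (hy t) _)
    (by exact_mod_cast Nat.multinomial_pos s f)

theorem MvPolynomial.IsHomogeneous.abs_eval_le [Fintype σ] {F : MvPolynomial σ R} {m : ℕ}
    (hF : F.IsHomogeneous m) {M : R} (hM : ∀ d, |coeff d F| ≤ M) (x : σ → R) :
    |eval x F| ≤ M * (∑ t, |x t|) ^ m := by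
  classical
  rw [hF.eval_eq_sum_finsuppAntidiag (s := univ) fun t ht => absurd (mem_univ t) ht]
  calc |∑ d ∈ univ.finsuppAntidiag m, coeff d F * ∏ t, x t ^ d t|
      ≤ ∑ d ∈ univ.finsuppAntidiag m, M * ∏ t, |x t| ^ d t := by
        refine (abs_sum_le_sum_abs _ _).trans (sum_le_sum fun d _ => ?_)
        rw [abs_mul, abs_prod]
        simp_rw [abs_pow]
        exact mul_le_mul_of_nonneg_right (hM d) (prod_nonneg fun t _ => by positivity)
    _ ≤ M * (∑ t, |x t|) ^ m := by
        rw [← mul_sum]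
        exact mul_le_mul_of_nonneg_left
          (sum_finsuppAntidiag_prod_pow_le _ _ fun t => abs_nonneg _)
          ((abs_nonneg _).trans (hM 0))

theorem Matrix.sum_abs_mulVec_le {τ : Type*} [Fintype σ] [Fintype τ] (A : Matrix σ τ R)
    (w : τ → R) : ∑ t, |(A *ᵥ w) t| ≤ ∑ s, (∑ t, |A t s|) * |w s| := by
  calc ∑ t, |(A *ᵥ w) t| ≤ ∑ t, ∑ s, |A t s| * |w s| :=
        sum_le_sum fun t _ => (abs_sum_le_sum_abs _ _).trans_eq (by simp_rw [abs_mul])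
    _ = _ := by
        rw [sum_comm]
        simp_rw [sum_mul]

theorem exists_isUnit_det_mulVec_piSingle [DecidableEq σ] [Fintype σ] {v : σ → R} {i : σ}
    (hv : v i = 1) (z : σ) :
    ∃ U : Matrix σ σ R, IsUnit U.det ∧ U *ᵥ Pi.single z 1 = v ∧
      ∀ w, ∑ t, |(U *ᵥ w) t| ≤ (∑ t, |v t|) * ∑ t, |w t| := by
  set A : Matrix σ σ R := (1 : Matrix σ σ R).updateCol i v
  set P : Matrix σ σ R := (Equiv.swap z i).permMatrix R
  have hA : A.det = 1 := by
    have h := det_updateCol_sum (1 : Matrix σ σ R) i v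
    have hv' : (fun k => ∑ j, v j • (1 : Matrix σ σ R) k j) = v := by
      ext k
      simp [one_apply]
    rwa [hv', det_one, hv, smul_eq_mul, mul_one] at h
  have hcol : ∀ s, ∑ t, |A t s| ≤ ∑ t, |v t| := by
    intro s
    rcases eq_or_ne s i with rfl | hs
    · simp [A]
    · calc ∑ t, |A t s| = |v i| := by simp [A, hs, one_apply, apply_ite, hv]
        _ ≤ _ := single_le_sum (fun t _ => abs_nonneg (v t)) (mem_univ i)
  refine ⟨A * P, ?_, ?_, fun w => ?_⟩
  · rw [det_mul, hA, one_mul, det_permutation]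
    exact (Equiv.Perm.sign _).isUnit.map (Int.castRingHom R)
  · rw [← mulVec_mulVec, permMatrix_mulVec, Pi.single_comp_equiv, Equiv.symm_swap,
      Equiv.swap_apply_left, mulVec_single_one]
    ext t
    simp [A]
  · rw [← mulVec_mulVec]
    calc ∑ t, |(A *ᵥ (P *ᵥ w)) t| ≤ ∑ s, (∑ t, |A t s|) * |(P *ᵥ w) s| := sum_abs_mulVec_le _ _
      _ ≤ ∑ s, (∑ t, |v t|) * |(P *ᵥ w) s| :=
        sum_le_sum fun s _ => mul_le_mul_of_nonneg_right (hcol s) (abs_nonneg _)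
      _ = (∑ t, |v t|) * ∑ t, |w t| := by
        rw [← mul_sum, permMatrix_mulVec]
        exact congrArg _ (Equiv.sum_comp _ fun t => |w t|)

end AbsBounds

section LinearSubstitution

variable {σ τ R : Type*} [CommSemiring R] [Fintype τ] (U : Matrix σ τ R)

theorem MvPolynomial.eval_bind₁_sum_C_mul_X (F : MvPolynomial σ R) (w : τ → R) :
    eval w (bind₁ (fun i => ∑ j, C (U i j) * X j) F) = eval (U *ᵥ w) F := by
  change eval₂Hom (RingHom.id R) w _ = _
  rw [eval₂Hom_bind₁]
  congr 2
  ext i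
  simp [mulVec, dotProduct]

theorem MvPolynomial.IsHomogeneous.bind₁_sum_C_mul_X {F : MvPolynomial σ R} {m : ℕ}
    (hF : F.IsHomogeneous m) : (bind₁ (fun i => ∑ j, C (U i j) * X j) F).IsHomogeneous m := by
  have h := hF.aeval (fun i => ∑ j, C (U i j) * X j) fun i =>
    IsHomogeneous.sum _ _ _ fun j _ => isHomogeneous_C_mul_X (U i j) j
  rwa [one_mul] at h

end LinearSubstitution

section TestVectors

variable {σ : Type*}

def IsTestVector [DecidableEq σ] (v : σ → ℤ) : Prop :=
  ∃ i j k b c, i ≠ j ∧ i ≠ k ∧ j ≠ k ∧ |b| ≤ 1 ∧ |c| ≤ 1 ∧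
    v = Pi.single i 1 + Pi.single j b + Pi.single k c

theorem IsTestVector.exists_eq_one [DecidableEq σ] {v : σ → ℤ} (hv : IsTestVector v) :
    ∃ i, v i = 1 := by
  obtain ⟨i, j, k, b, c, hij, hik, -, -, -, rfl⟩ := hv
  exact ⟨i, by simp [hij, hik]⟩

variable [Fintype σ]

theorem IsTestVector.sum_abs_le [DecidableEq σ] {v : σ → ℤ} (hv : IsTestVector v) :
    ∑ t, |v t| ≤ 3 := by
  obtain ⟨i, j, k, b, c, hij, hik, hjk, hb, hc, rfl⟩ := hv
  rw [← sum_subset (subset_univ {i, j, k}) fun t _ ht => by simp_all]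
  simp [hij, hik, hjk, hij.symm, hik.symm, hjk.symm]
  linarith

theorem exists_ne_ne_of_three_le_card (hσ : 3 ≤ Fintype.card σ) (a b : σ) :
    ∃ c, c ≠ a ∧ c ≠ b := by
  classical
  obtain ⟨c, -, hc⟩ := exists_mem_notMem_of_card_lt_card (s := {a, b}) (t := univ)
    (card_le_two.trans_lt (by rwa [card_univ]))
  simp only [mem_insert, mem_singleton, not_or] at hc
  exact ⟨c, hc⟩

theorem Finsupp.exists_eq_of_degree_eq_three (hσ : 3 ≤ Fintype.card σ) {d : σ →₀ ℕ}
    (hd : d.degree = 3) :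
    ∃ i j k, i ≠ j ∧ i ≠ k ∧ j ≠ k ∧ (d = single i 3 ∨ d = single i 2 + single j 1 ∨
      d = single i 1 + single j 1 + single k 1) := by
  classical
  obtain ⟨x, y, z, hxyz⟩ := Multiset.card_eq_three.mp ((card_toMultiset d).trans hd)
  have hd : d = single x 1 + single y 1 + single z 1 := by
    rw [← toMultiset_toFinsupp d, hxyz]
    simp [← Multiset.singleton_add, add_assoc]
  rcases eq_or_ne x y with rfl | hxy
  · obtain ⟨k, hkx, hkz⟩ := exists_ne_ne_of_three_le_card hσ x z
    rcases eq_or_ne x z with rfl | hxz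
    · obtain ⟨j, hjx, hjk⟩ := exists_ne_ne_of_three_le_card hσ x k
      refine ⟨x, j, k, hjx.symm, hkx.symm, hjk, Or.inl ?_⟩
      rw [hd, ← single_add, ← single_add]
    · exact ⟨x, z, k, hxz, hkx.symm, hkz.symm, Or.inr (Or.inl (by rw [hd, ← single_add]))⟩
  · obtain ⟨k, hkx, hky⟩ := exists_ne_ne_of_three_le_card hσ x y
    rcases eq_or_ne y z with rfl | hyz
    · refine ⟨y, x, k, hxy.symm, hky.symm, hkx.symm, Or.inr (Or.inl ?_)⟩
      rw [hd, add_assoc, ← single_add, add_comm]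
    rcases eq_or_ne x z with rfl | hxz
    · refine ⟨x, y, k, hxy, hkx.symm, hky.symm, Or.inr (Or.inl ?_)⟩
      rw [hd, add_right_comm, ← single_add]
    · exact ⟨x, y, z, hxy, hxz, hyz, Or.inr (Or.inr hd)⟩

variable [DecidableEq σ]

theorem abs_coeff_le_of_isTestVector (hσ : 3 ≤ Fintype.card σ) {F : MvPolynomial σ ℤ}
    (hF : F.IsHomogeneous 3) {K : ℤ} (hK : ∀ v, IsTestVector v → 2 * |eval v F| ≤ K)
    (d : σ →₀ ℕ) : |coeff d F| ≤ K := by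
  have hK' : ∀ i j k b c, i ≠ j → i ≠ k → j ≠ k → |b| ≤ 1 → |c| ≤ 1 →
      |2 * eval (Pi.single i 1 + Pi.single j b + Pi.single k c) F| ≤ K := by
    intro i j k b c hij hik hjk hb hc
    rw [abs_mul, abs_two]
    exact hK _ ⟨i, j, k, b, c, hij, hik, hjk, hb, hc, rfl⟩
  rcases eq_or_ne (coeff d F) 0 with h0 | h0
  · obtain ⟨i, j, k, hij, hik, hjk⟩ := Fintype.two_lt_card_iff.mp hσ
    rw [h0, abs_zero]
    exact (abs_nonneg _).trans (hK' i j k 0 0 hij hik hjk (by simp) (by simp))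
  have hdeg : d.degree = 3 := by
    rw [Finsupp.degree_eq_weight_one]
    exact hF h0
  obtain ⟨i, j, k, hij, hik, hjk, rfl | rfl | rfl⟩ := Finsupp.exists_eq_of_degree_eq_three hσ hdeg
  · have h := hK' i j k 0 0 hij hik hjk (by simp) (by simp)
    simp only [Pi.single_zero, add_zero, hF.eval_piSingle, one_pow, mul_one] at h
    rw [abs_le] at h ⊢
    constructor <;> linarith
  · have h1 := hK' i j k 1 0 hij hik hjk (by simp) (by simp)
    have h2 := hK' i j k (-1) 0 hij hik hjk (by simp) (by simp)
    have h3 := hK' j i k 0 0 hij.symm hjk hik (by simp) (by simp)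
    have h := hF.two_mul_coeff_sq_mul hij
    simp only [Pi.single_zero, add_zero] at h1 h2 h3
    rw [abs_le] at h1 h2 h3 ⊢
    constructor <;> linarith
  · have h1 := hK' i j k 1 1 hij hik hjk (by simp) (by simp)
    have h2 := hK' i j k 1 (-1) hij hik hjk (by simp) (by simp)
    have h3 := hK' i j k (-1) 1 hij hik hjk (by simp) (by simp)
    have h4 := hK' i j k (-1) (-1) hij hik hjk (by simp) (by simp)
    have h := hF.four_mul_coeff_mul_mul hij hik hjk
    rw [abs_le] at h1 h2 h3 h4 ⊢
    constructor <;> linarith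

theorem exists_isTestVector_abs_coeff_le (hσ : 3 ≤ Fintype.card σ) {F : MvPolynomial σ ℤ}
    (hF : F.IsHomogeneous 3) (d : σ →₀ ℕ) :
    ∃ v, IsTestVector v ∧ |coeff d F| ≤ 2 * |eval v F| := by
  by_contra! h
  have := abs_coeff_le_of_isTestVector hσ hF (K := |coeff d F| - 1)
    (fun v hv => Int.le_sub_one_of_lt (h v hv)) d
  omega

end TestVectors

theorem exists_isUnit_det_abs_coeff_le_and_le_coeff_single {σ : Type*} [Fintype σ]
    [DecidableEq σ] (hσ : 3 ≤ Fintype.card σ) (z : σ) {F : MvPolynomial σ ℤ} (hF : F.IsHomogeneous 3) {M : ℤ}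
    (hM : ∀ d, |coeff d F| ≤ M) (hmax : ∃ d, |coeff d F| = M) :
    ∃ (U : Matrix σ σ ℤ) (ε : ℤ), IsUnit U.det ∧ (ε = 1 ∨ ε = -1) ∧
      (∀ d, |coeff d (bind₁ (fun i => ∑ j, C (U i j) * X j) F)| ≤ 1458 * M) ∧
      M ≤ 2 * (ε * coeff (Finsupp.single z 3) (bind₁ (fun i => ∑ j, C (U i j) * X j) F)) := by
  obtain ⟨d, hd⟩ := hmax
  obtain ⟨v, hv, hFv⟩ := exists_isTestVector_abs_coeff_le hσ hF d
  obtain ⟨i, hi⟩ := hv.exists_eq_one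
  obtain ⟨U, hU, hUz, hUw⟩ := exists_isUnit_det_mulVec_piSingle hi z
  have hG := hF.bind₁_sum_C_mul_X U
  have hlead :
      coeff (Finsupp.single z 3) (bind₁ (fun i => ∑ j, C (U i j) * X j) F) = eval v F := by
    rw [← hUz, ← eval_bind₁_sum_C_mul_X, hG.eval_piSingle, one_pow, mul_one]
  have hM0 : 0 ≤ M := hd ▸ abs_nonneg _
  have hbound : ∀ d, |coeff d (bind₁ (fun i => ∑ j, C (U i j) * X j) F)| ≤ 1458 * M := by
    refine abs_coeff_le_of_isTestVector hσ hG fun w hw => ?_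
    have hUw9 : ∑ t, |(U *ᵥ w) t| ≤ 9 := (hUw w).trans <| by
      nlinarith [hv.sum_abs_le, hw.sum_abs_le, sum_nonneg fun t (_ : t ∈ univ) => abs_nonneg (w t)]
    calc 2 * |eval w (bind₁ (fun i => ∑ j, C (U i j) * X j) F)|
        ≤ 2 * (M * (∑ t, |(U *ᵥ w) t|) ^ 3) := by
          rw [eval_bind₁_sum_C_mul_X]
          gcongr
          exact hF.abs_eval_le hM _
      _ ≤ 2 * (M * 9 ^ 3) := by gcongr
      _ = 1458 * M := by ring
  rcases abs_choice (eval v F) with hpos | hneg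
  · exact ⟨U, 1, hU, Or.inl rfl, hbound, by rw [hlead]; linarith⟩
  · exact ⟨U, -1, hU, Or.inr rfl, hbound, by rw [hlead]; linarith⟩

/-- A unimodular change of variables puts a cubic form into a shape where the
coefficient of `X 0 ^ 3` (possibly after negating the form) is `≫ M`, while all
coefficients stay `≪ M`. -/
theorem stmt_1 :
    ∃ c c' : ℝ, 0 < c ∧ 0 < c' ∧
      ∀ (n : ℕ) (hn : 3 ≤ n) (C : MvPolynomial (Fin n) ℤ) (M : ℤ),
        1 ≤ M → C.IsHomogeneous 3 →
        (∀ d, |C.coeff d| ≤ M) → (∃ d, |C.coeff d| = M) →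
        ∃ (U : Matrix (Fin n) (Fin n) ℤ) (ε : ℤ), IsUnit U.det ∧ (ε = 1 ∨ ε = -1) ∧
          (∀ d, ((|(MvPolynomial.bind₁
              (fun i => ∑ j, MvPolynomial.C (U i j) * MvPolynomial.X j) C).coeff d| : ℤ) : ℝ)
            ≤ c * (M : ℝ)) ∧
          c' * (M : ℝ) ≤ ((ε * (MvPolynomial.bind₁
              (fun i => ∑ j, MvPolynomial.C (U i j) * MvPolynomial.X j) C).coeff
                (Finsupp.single (⟨0, by omega⟩ : Fin n) 3) : ℤ) : ℝ) := by
  refine ⟨1458, 1 / 2, by norm_num, by norm_num, fun n hn C M _ hC hM hmax => ?_⟩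
  obtain ⟨U, ε, hU, hε, hbound, hlead⟩ :=
    exists_isUnit_det_abs_coeff_le_and_le_coeff_single (by simpa using hn) ⟨0, by omega⟩ hC hM hmax
  refine ⟨U, ε, hU, hε, fun d => by exact_mod_cast hbound d, ?_⟩
  have h := (Int.cast_le (R := ℝ)).mpr hlead
  push_cast at h ⊢
  linarith
end

section
/- Let p be a prime and let C ∈ 𝔽_p[X_1,…,X_n] be a cubic form with a singular zero at e_1 = (1,0,…,0). Then C can be written as C(X) = X_1·Q(X_2,…,X_n) + C̃(X_2,…,X_n) for some quadratic form Q and cubic form C̃ not involving X_1. If moreover C is non-degenerate (so Q is not identically zero), then C has at least p^{n-1} - 2p^{n-2} non-singular zeros in 𝔽_p^n. -/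
/-!
Vanishing of `C` and of its gradient at `e₁` kills the coefficients of `X₁³` and of every
`X₁² Xⱼ`, so `X₁` occurs at most linearly: `C = X₁ Q + C̃`. If `Q = 0` then `C` does not involve
`X₁`, so non-degeneracy gives `Q ≠ 0`. For each `y ∈ 𝔽_p^{n-1}` with `Q(y) ≠ 0`, solving the
linear equation `x₁ Q(y) + C̃(y) = 0` gives a zero of `C` at which `∂C/∂X₁ = Q(y) ≠ 0`, and by
Schwartz–Zippel the quadratic form `Q` vanishes at no more than `2 p^{n-2}` points of `𝔽_p^{n-1}`.
-/

/-- A cubic form over `𝔽_p` is degenerate if some invertible linear substitution takes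
it to a form in fewer variables. -/
def IsDegenerateCubic (p n : ℕ) (C : MvPolynomial (Fin n) (ZMod p)) : Prop :=
  ∃ M : Matrix (Fin n) (Fin n) (ZMod p), IsUnit M.det ∧
    ∃ j : Fin n,
      j ∉ (MvPolynomial.bind₁
        (fun i => ∑ k, MvPolynomial.C (M i k) * MvPolynomial.X k) C).vars

open MvPolynomial Finset

theorem Finsupp.exists_eq_single_add_single_of_degree_eq_succ {σ : Type*} {m : σ →₀ ℕ} {i : σ}
    {k : ℕ} (hi : k ≤ m i) (hm : m.degree = k + 1) :
    ∃ j, m = single i k + single j 1 := by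
  set r := m - single i k
  have hmr : m = single i k + r := by rw [add_tsub_cancel_of_le (single_le_iff.mpr hi)]
  have hr : r.degree = 1 := by
    have := congrArg degree hmr
    rw [map_add, degree_single, hm] at this
    omega
  obtain ⟨j, hj⟩ : ∃ j, r j ≠ 0 := by
    by_contra! h0
    rw [show r = 0 from ext h0, map_zero] at hr
    exact zero_ne_one hr
  have hle : single j 1 ≤ r := single_le_iff.mpr (Nat.one_le_iff_ne_zero.mpr hj)
  have hrest : (r - single j 1).degree = 0 := by
    have := congrArg degree (tsub_add_cancel_of_le hle)
    rw [map_add, degree_single, hr] at this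
    omega
  rw [degree_eq_zero_iff, tsub_eq_zero_iff_le] at hrest
  exact ⟨j, hmr.trans (congrArg _ (le_antisymm hrest hle))⟩

namespace MvPolynomial

variable {σ R : Type*} [CommSemiring R]

theorem isHomogeneous_of_coeff_ne_zero {P : MvPolynomial σ R} {n : ℕ}
    (h : ∀ m, coeff m P ≠ 0 → m.degree = n) : P.IsHomogeneous n := fun m hm => by
  simpa [Finsupp.degree_eq_weight_one, Pi.one_def] using h m hm

theorem IsHomogeneous.eval_single_one [DecidableEq σ] {P : MvPolynomial σ R} {d : ℕ}
    (hP : P.IsHomogeneous d) (i : σ) :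
    eval (Pi.single i 1) P = coeff (Finsupp.single i d) P := by
  rw [eval_eq, Finset.sum_eq_single (Finsupp.single i d)]
  · rw [← Finsupp.prod, Finsupp.prod_single_index (by simp)]
    simp
  · intro m hm hmi
    obtain ⟨k, hk, hki⟩ : ∃ k ∈ m.support, k ≠ i := by
      by_contra! h
      have hm_eq := Finsupp.support_subset_singleton.mp fun k hk => mem_singleton.mpr (h k hk)
      have hdeg : m.degree = d := by_contra fun h => mem_support_iff.mp hm (hP.coeff_eq_zero h)
      rw [hm_eq, Finsupp.degree_single] at hdeg
      exact hmi (hm_eq.trans (by rw [hdeg]))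
    rw [prod_eq_zero hk (by simp [hki, Finsupp.mem_support_iff.mp hk]), mul_zero]
  · intro h
    rw [notMem_support_iff.mp h, zero_mul]

/-- The coefficients of `Xᵢ³` and of `Xᵢ² Xⱼ` (`j ≠ i`) are the values at `eᵢ` of `C` and of
`∂C/∂Xⱼ`. -/
theorem IsHomogeneous.coeff_eq_zero_of_singular_zero_single [DecidableEq σ]
    {C : MvPolynomial σ R} (hC : C.IsHomogeneous 3) {i : σ} (hzero : eval (Pi.single i 1) C = 0)
    (hsing : ∀ j, eval (Pi.single i 1) (pderiv j C) = 0) {m : σ →₀ ℕ} (hm : 2 ≤ m i) :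
    coeff m C = 0 := by
  by_contra hmC
  have hdeg : m.degree = 3 := by_contra fun h => hmC (hC.coeff_eq_zero h)
  obtain ⟨j, rfl⟩ := Finsupp.exists_eq_single_add_single_of_degree_eq_succ hm hdeg
  apply hmC
  obtain rfl | hji := eq_or_ne j i
  · rw [← Finsupp.single_add, ← hC.eval_single_one, hzero]
  · have := hsing j
    rw [hC.pderiv.eval_single_one, coeff_pderiv] at this
    simpa [Finsupp.single_apply, hji] using this

theorem exists_eq_X_mul_add_of_coeff_eq_zero {P : MvPolynomial σ R} {d : ℕ}
    (hP : P.IsHomogeneous (d + 1)) {i : σ} (h : ∀ m : σ →₀ ℕ, 2 ≤ m i → coeff m P = 0) :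
    ∃ Q T : MvPolynomial σ R, Q.IsHomogeneous d ∧ T.IsHomogeneous (d + 1) ∧
      i ∉ Q.vars ∧ i ∉ T.vars ∧ P = X i * Q + T := by
  refine ⟨P.divMonomial (Finsupp.single i 1), P.modMonomial (Finsupp.single i 1),
    ?_, ?_, ?_, ?_, (divMonomial_add_modMonomial_single P i).symm⟩
  · refine isHomogeneous_of_coeff_ne_zero fun m hm => ?_
    rw [coeff_divMonomial] at hm
    have := by_contra fun h => hm (hP.coeff_eq_zero h)
    rw [map_add, Finsupp.degree_single] at this
    omega
  · refine isHomogeneous_of_coeff_ne_zero fun m hm => by_contra fun h => hm ?_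
    by_cases hle : Finsupp.single i 1 ≤ m
    · exact coeff_modMonomial_of_le _ hle
    · rw [coeff_modMonomial_of_not_le _ hle, hP.coeff_eq_zero h]
  · simp only [mem_vars_iff_mem_support, mem_support_iff, coeff_divMonomial,
      Finsupp.mem_support_iff, not_exists, not_and]
    intro m hm hmi
    exact hm (h _ (by simp only [Finsupp.add_apply, Finsupp.single_eq_same]; omega))
  · simp only [mem_vars_iff_mem_support, mem_support_iff, Finsupp.mem_support_iff, not_exists,
      not_and]
    intro m hm hmi
    exact hm (coeff_modMonomial_of_le _ (Finsupp.single_le_iff.mpr (Nat.one_le_iff_ne_zero.mpr hmi)))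

theorem eval_cons_rename_succ {m : ℕ} (P : MvPolynomial (Fin m) R) (a : R) (y : Fin m → R) :
    eval (Fin.cons a y) (rename Fin.succ P) = eval y P := by
  rw [eval_rename, Fin.cons_comp_succ]

theorem zero_notMem_vars_rename_succ {m : ℕ} (P : MvPolynomial (Fin m) R) :
    0 ∉ (rename Fin.succ P).vars := fun h => by
  obtain ⟨j, -, hj⟩ := mem_image.mp (vars_rename _ _ h)
  exact Fin.succ_ne_zero j hj

def nonsingularZeros (C : MvPolynomial σ R) : Set (σ → R) :=
  {x | eval x C = 0 ∧ ∃ j, eval x (pderiv j C) ≠ 0}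

variable {F : Type*} [Field F] [Fintype F] [DecidableEq F] {m : ℕ}

theorem le_card_eval_ne_zero {Q : MvPolynomial (Fin m) F} (hQ : Q ≠ 0) :
    (Fintype.card F : ℤ) ^ m - Q.totalDegree * Fintype.card F ^ (m - 1)
      ≤ #{x | eval x Q ≠ 0} := by
  set q := Fintype.card F
  have hq : 0 < q := Fintype.card_pos
  have hsz := schwartz_zippel_totalDegree hQ univ
  rw [Fintype.piFinset_univ, card_univ, div_le_div_iff₀ (by positivity) (by positivity)] at hsz
  have hzeros : #{x | eval x Q = 0} * q ≤ Q.totalDegree * q ^ m := by exact_mod_cast hsz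
  have hpow : q ^ m ≤ q ^ (m - 1) * q := by
    rw [← pow_succ]
    exact Nat.pow_le_pow_right hq (by omega)
  have hzeros' : #{x | eval x Q = 0} ≤ Q.totalDegree * q ^ (m - 1) :=
    Nat.le_of_mul_le_mul_right (hzeros.trans (by rw [mul_assoc]; gcongr)) hq
  have hsplit := card_filter_add_card_filter_not (s := univ) (fun x : Fin m → F => eval x Q = 0)
  rw [card_univ, Fintype.card_fun, Fintype.card_fin] at hsplit
  zify at hsplit hzeros'
  linarith

theorem card_le_card_nonsingularZeros (Q T : MvPolynomial (Fin m) F) :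
    #{y | eval y Q ≠ 0} ≤
      Nat.card (nonsingularZeros (X 0 * rename Fin.succ Q + rename Fin.succ T)) := by
  have hpderiv : pderiv 0 (X 0 * rename Fin.succ Q + rename Fin.succ T) = rename Fin.succ Q := by
    simp [pderiv_eq_zero_of_notMem_vars (zero_notMem_vars_rename_succ _)]
  let lift : {y // eval y Q ≠ 0} →
      nonsingularZeros (X 0 * rename Fin.succ Q + rename Fin.succ T) :=
    fun y => ⟨Fin.cons (-eval y.1 T / eval y.1 Q) y.1, by
      refine ⟨?_, 0, ?_⟩
      · simp [eval_cons_rename_succ, div_mul_cancel₀ _ y.2]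
      · rw [hpderiv, eval_cons_rename_succ]
        exact y.2⟩
  calc #{y | eval y Q ≠ 0} = Nat.card {y // eval y Q ≠ 0} := by
        rw [Nat.card_eq_fintype_card, Fintype.card_subtype]
    _ ≤ _ := Nat.card_le_card_of_injective lift fun y z h =>
        Subtype.ext (congrArg (Fin.tail ∘ Subtype.val) h :)

end MvPolynomial

theorem isDegenerateCubic_of_notMem_vars {p n : ℕ} {C : MvPolynomial (Fin n) (ZMod p)}
    {j : Fin n} (h : j ∉ C.vars) : IsDegenerateCubic p n C :=
  ⟨1, by simp, j, by simpa [Matrix.one_apply] using h⟩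

/-- If a cubic form `C` over `𝔽_p` has a singular zero at `e₁`, then
`C = X₁·Q(X₂,…,Xₙ) + C̃(X₂,…,Xₙ)`; if moreover `C` is non-degenerate then it has at
least `p^{n-1} - 2p^{n-2}` non-singular zeros. -/
theorem stmt_5 (p n : ℕ) (hp : p.Prime) (hn : 0 < n)
    (C : MvPolynomial (Fin n) (ZMod p)) (hC : C.IsHomogeneous 3)
    (hzero : MvPolynomial.eval (fun j => if j = (⟨0, hn⟩ : Fin n) then 1 else 0) C = 0)
    (hsing : ∀ j : Fin n,
      MvPolynomial.eval (fun l => if l = (⟨0, hn⟩ : Fin n) then 1 else 0)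
        (MvPolynomial.pderiv j C) = 0) :
    (∃ Q T : MvPolynomial (Fin n) (ZMod p),
      Q.IsHomogeneous 2 ∧ T.IsHomogeneous 3 ∧
      (⟨0, hn⟩ : Fin n) ∉ Q.vars ∧ (⟨0, hn⟩ : Fin n) ∉ T.vars ∧
      C = MvPolynomial.X (⟨0, hn⟩ : Fin n) * Q + T) ∧
    (¬ IsDegenerateCubic p n C →
      (p : ℤ) ^ (n - 1) - 2 * (p : ℤ) ^ (n - 2)
        ≤ (Nat.card {x : Fin n → ZMod p | MvPolynomial.eval x C = 0 ∧
            ∃ j, MvPolynomial.eval x (MvPolynomial.pderiv j C) ≠ 0} : ℤ)) := by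
  have he : (fun j => if j = (⟨0, hn⟩ : Fin n) then 1 else 0) =
      Pi.single (M := fun _ => ZMod p) ⟨0, hn⟩ 1 :=
    funext fun j => (Pi.single_apply _ _ _).symm
  rw [he] at hzero
  simp only [he] at hsing
  have hdecomp := exists_eq_X_mul_add_of_coeff_eq_zero hC fun m hm =>
    hC.coeff_eq_zero_of_singular_zero_single hzero hsing hm
  refine ⟨hdecomp, fun hnd => ?_⟩
  obtain ⟨Q, T, hQ, -, hQv, hTv, rfl⟩ := hdecomp
  have hQ0 : Q ≠ 0 := by
    rintro rfl
    exact hnd (isDegenerateCubic_of_notMem_vars (by simpa using hTv))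
  obtain ⟨m, rfl⟩ := Nat.exists_eq_add_one_of_ne_zero hn.ne'
  have : Fact p.Prime := ⟨hp⟩
  obtain ⟨Q, rfl⟩ := exists_rename_eq_of_vars_subset_range Q Fin.succ (Fin.succ_injective m)
    fun j hj => Fin.exists_succ_eq.mpr (ne_of_mem_of_not_mem hj hQv)
  obtain ⟨T, rfl⟩ := exists_rename_eq_of_vars_subset_range T Fin.succ (Fin.succ_injective m)
    fun j hj => Fin.exists_succ_eq.mpr (ne_of_mem_of_not_mem hj hTv)
  replace hQ0 : Q ≠ 0 := by
    rintro rfl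
    exact hQ0 (map_zero _)
  have hdeg : Q.totalDegree = 2 :=
    ((IsHomogeneous.rename_isHomogeneous_iff (Fin.succ_injective m)).mp hQ).totalDegree hQ0
  have hnonzero := le_card_eval_ne_zero hQ0
  rw [hdeg, ZMod.card] at hnonzero
  exact_mod_cast hnonzero.trans (Nat.cast_le.mpr (card_le_card_nonsingularZeros Q T))
end

section
/- Let p be a prime, h < n, and let C ∈ 𝔽_p[X_1,…,X_n] be a cubic form depending only on X_1,…,X_h such that C, viewed as a form in h variables, has no non-trivial zero over 𝔽_p. Then every zero x ∈ 𝔽_p^n of C satisfies x_1 = … = x_h = 0, and hence for every k ≥ 1, ρ(p^k) = p^{(n-h)} · ρ̃(p^{k-1}), where ρ̃ counts zeros modulo p^{k-1} of the cubic form C̃(X) = p^{-1} C(pX_1,…,pX_h, X_{h+1},…,X_n). -/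
/-!
Reducing modulo `p`, the hypothesis on `C` forces every zero of `C` modulo `p^k` to have its
first `h` coordinates divisible by `p`. Let `c_j = p` for `j < h` and `c_j = 1` otherwise. Then
`C(c·w) = p·D(w)`, and `p·t = 0` in `ℤ/p^k` exactly when `t ≡ 0 mod p^(k-1)`, so the preimage of
the zeros of `C` under the additive map `w ↦ c·w` of `(ℤ/p^k)^n` equals the preimage of the
zeros of `D` under reduction to `(ℤ/p^(k-1))^n`. The first map has kernel of size `p^h` and hits
every zero of `C`, the second is onto with kernel of size `p^n`; counting this set in both ways
gives `p^h ρ(p^k) = p^n ρ̃(p^(k-1))`.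
-/

open MvPolynomial

theorem AddMonoidHom.card_preimage_of_subset_range {G H : Type*} [AddGroup G] [AddGroup H]
    (f : G →+ H) {S : Set H} (hS : S ⊆ Set.range f) :
    Nat.card (f ⁻¹' S) = Nat.card f.ker * Nat.card S := by
  choose s hs using fun t : S => hS t.2
  rw [← Nat.card_prod]
  refine Nat.card_congr
    { toFun := fun g => (⟨g - s ⟨f g, g.2⟩, by simp [hs]⟩, ⟨f g, g.2⟩)
      invFun := fun kt => ⟨kt.1 + s kt.2, by simp [hs, AddMonoidHom.mem_ker.mp kt.1.2]⟩
      left_inv := fun g => by simp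
      right_inv := fun ⟨k, t⟩ => ?_ }
  have hk : f (k + s t) = t := by simp [hs, AddMonoidHom.mem_ker.mp k.2]
  ext <;> simp [hk]

theorem ZMod.natCast_mul_eq_zero_iff {a b : ℕ} (ha : a ≠ 0) (x : ZMod (a * b)) :
    (a : ZMod (a * b)) * x = 0 ↔ ZMod.castHom (dvd_mul_left b a) (ZMod b) x = 0 := by
  obtain ⟨z, rfl⟩ := ZMod.intCast_surjective x
  rw [map_intCast, ← Int.cast_natCast, ← Int.cast_mul, ZMod.intCast_zmod_eq_zero_iff_dvd,
    ZMod.intCast_zmod_eq_zero_iff_dvd, Nat.cast_mul]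
  exact mul_dvd_mul_iff_left (by exact_mod_cast ha)

theorem ZMod.castHom_eq_zero_iff_dvd {a N : ℕ} (h : a ∣ N) (x : ZMod N) :
    ZMod.castHom h (ZMod a) x = 0 ↔ (a : ZMod N) ∣ x := by
  refine ⟨fun hx => ?_, fun ⟨t, ht⟩ => by
    rw [ht, map_mul, map_natCast, ZMod.natCast_self, zero_mul]⟩
  obtain ⟨z, rfl⟩ := ZMod.intCast_surjective x
  obtain ⟨t, rfl⟩ := (ZMod.intCast_zmod_eq_zero_iff_dvd z a).mp (by simpa using hx)
  exact ⟨t, by push_cast; rfl⟩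

theorem ZMod.card_natCast_mul_eq_zero {a b : ℕ} [NeZero a] [NeZero b] :
    Nat.card {x : ZMod (a * b) // (a : ZMod (a * b)) * x = 0} = a := by
  set π := ZMod.castHom (dvd_mul_left b a) (ZMod b)
  have hker : {x : ZMod (a * b) // (a : ZMod (a * b)) * x = 0} =
      (π : ZMod (a * b) →+ ZMod b).ker := by
    simp [ZMod.natCast_mul_eq_zero_iff (NeZero.ne a), π]
  have hcard := (π : ZMod (a * b) →+ ZMod b).card_preimage_of_subset_range (S := Set.univ)
    fun y _ => ZMod.castHom_surjective (dvd_mul_left b a) y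
  rw [Set.preimage_univ, Nat.card_univ, Nat.card_univ, Nat.card_zmod, Nat.card_zmod] at hcard
  rw [hker]
  exact (Nat.eq_of_mul_eq_mul_right (Nat.pos_of_neZero b) hcard).symm

theorem AddMonoidHom.card_ker_mulLeft_pi {σ R : Type*} [Fintype σ] [Ring R] (c : σ → R) :
    Nat.card (AddMonoidHom.mulLeft c).ker = ∏ j, Nat.card {r : R // c j * r = 0} := by
  rw [← Nat.card_pi]
  exact Nat.card_congr <| (Equiv.subtypeEquivRight fun w => by
    simp [funext_iff]).trans (Equiv.subtypePiEquivPi)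

theorem MvPolynomial.eval_map_intCastRingHom {σ R : Type*} [CommRing R] (x : σ → R)
    (P : MvPolynomial σ ℤ) : eval x (P.map (Int.castRingHom R)) = aeval x P := by
  rw [eval_map, aeval_def, algebraMap_int_eq]

theorem MvPolynomial.ringHom_aeval_int {σ R S : Type*} [CommRing R] [CommRing S] (f : R →+* S)
    (x : σ → R) (P : MvPolynomial σ ℤ) : f (aeval x P) = aeval (fun i => f (x i)) P :=
  comp_aeval_apply x f.toIntAlgHom P

theorem MvPolynomial.apply_eq_zero_of_eval_eq_zero {σ R : Type*} [CommSemiring R]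
    {Q : MvPolynomial σ R} {P : σ → Prop} [DecidablePred P] (hvars : ∀ i ∈ Q.vars, P i)
    (hQ : ∀ y : σ → R, (∀ i, ¬P i → y i = 0) → eval y Q = 0 → y = 0)
    {x : σ → R} (hx : eval x Q = 0) {i : σ} (hi : P i) : x i = 0 := by
  have hrestrict : eval (fun j => if P j then x j else 0) Q = eval x Q :=
    eval₂Hom_congr' rfl (fun j hj _ => if_pos (hvars j hj)) rfl
  simpa [hi] using congrFun (hQ _ (fun j hj => if_neg hj) (hrestrict.trans hx)) i

section ScaledZeros

variable {σ : Type*} (P : σ → Prop) [DecidablePred P] {C D : MvPolynomial σ ℤ} {r : ℤ}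

theorem MvPolynomial.aeval_mul_eq_of_C_mul_eq_bind₁
    (hD : MvPolynomial.C r * D = bind₁ (fun j => if P j then MvPolynomial.C r * X j else X j) C)
    {R : Type*} [CommRing R] (w : σ → R) :
    aeval ((fun j => if P j then (r : R) else 1) * w) C = r * aeval w D := by
  have hsubst : (fun j => aeval w (if P j then MvPolynomial.C r * X j else X j)) =
      (fun j => if P j then (r : R) else 1) * w := by
    funext j
    by_cases hj : P j <;> simp [hj]
  have := congrArg (aeval w) hD
  rw [aeval_bind₁, hsubst, map_mul, aeval_C, algebraMap_int_eq, eq_intCast] at this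
  exact this.symm

theorem MvPolynomial.card_zeros_mul_pow_eq_pow_mul_card_zeros [Fintype σ] {a b : ℕ} [NeZero a] [NeZero b]
    (hD : MvPolynomial.C (a : ℤ) * D =
      bind₁ (fun j => if P j then MvPolynomial.C (a : ℤ) * X j else X j) C)
    (hdvd : ∀ x : σ → ZMod (a * b), aeval x C = 0 → ∀ j, P j → (a : ZMod (a * b)) ∣ x j) :
    Nat.card {x : σ → ZMod (a * b) | aeval x C = 0} * a ^ Fintype.card {j // P j} =
      a ^ Fintype.card σ * Nat.card {y : σ → ZMod b | aeval y D = 0} := by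
  set π := ZMod.castHom (dvd_mul_left b a) (ZMod b)
  set scale := AddMonoidHom.mulLeft fun j => if P j then (a : ZMod (a * b)) else 1
  set red := (π : ZMod (a * b) →+ ZMod b).compLeft σ
  have hpre : scale ⁻¹' {x | aeval x C = 0} = red ⁻¹' {y | aeval y D = 0} := by
    ext w
    simp only [Set.mem_preimage, Set.mem_ofPred_eq, scale, AddMonoidHom.coe_mulLeft]
    have hscale := aeval_mul_eq_of_C_mul_eq_bind₁ P hD w
    rw [Int.cast_natCast] at hscale
    rw [hscale, ZMod.natCast_mul_eq_zero_iff (NeZero.ne a), ringHom_aeval_int]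
    rfl
  have hS : {x | aeval x C = 0} ⊆ Set.range scale := fun x hx => by
    choose t ht using hdvd x hx
    refine ⟨fun j => if hj : P j then t j hj else x j, _root_.funext fun j => ?_⟩
    by_cases hj : P j <;> simp [scale, hj, ht]
  have hT : {y | aeval y D = 0} ⊆ Set.range red := fun y _ =>
    (ZMod.castHom_surjective (dvd_mul_left b a)).comp_left y
  have hker_scale : Nat.card scale.ker = a ^ Fintype.card {j // P j} := by
    have hfactor : ∀ j, Nat.card {r : ZMod (a * b) //
        (if P j then (a : ZMod (a * b)) else 1) * r = 0} = if P j then a else 1 := fun j => by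
      by_cases hj : P j
      · simp only [hj, if_true, ZMod.card_natCast_mul_eq_zero]
      · simp [hj]
    rw [AddMonoidHom.card_ker_mulLeft_pi, Finset.prod_congr rfl fun j _ => hfactor j,
      Finset.prod_ite, Finset.prod_const_one, mul_one, Finset.prod_const, Fintype.card_subtype]
  have hker_red : Nat.card red.ker = a ^ Fintype.card σ := by
    have : red.ker = (AddMonoidHom.mulLeft fun _ : σ => (a : ZMod (a * b))).ker := by
      ext w
      simp [red, _root_.funext_iff, ZMod.natCast_mul_eq_zero_iff (NeZero.ne a), π]
    rw [this, AddMonoidHom.card_ker_mulLeft_pi, ZMod.card_natCast_mul_eq_zero, Finset.prod_const,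
      Finset.card_univ]
  calc Nat.card {x : σ → ZMod (a * b) | aeval x C = 0} * a ^ Fintype.card {j // P j}
    _ = Nat.card (scale ⁻¹' {x | aeval x C = 0}) := by
        rw [scale.card_preimage_of_subset_range hS, hker_scale, mul_comm]
    _ = Nat.card (red ⁻¹' {y | aeval y D = 0}) := by rw [hpre]
    _ = a ^ Fintype.card σ * Nat.card {y : σ → ZMod b | aeval y D = 0} := by
        rw [red.card_preimage_of_subset_range hT, hker_red]

end ScaledZeros

theorem stmt_8_general (p n h k : ℕ) (hp : p.Prime) (hhn : h < n) (hk : 1 ≤ k)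
    (C : MvPolynomial (Fin n) ℤ)
    (hvars : ∀ j ∈ (C.map (Int.castRingHom (ZMod p))).vars, (j : ℕ) < h)
    (hnozero : ∀ y : Fin n → ZMod p, (∀ j : Fin n, h ≤ (j : ℕ) → y j = 0) →
      MvPolynomial.eval y (C.map (Int.castRingHom (ZMod p))) = 0 → y = 0)
    (D : MvPolynomial (Fin n) ℤ)
    (hD : MvPolynomial.C (p : ℤ) * D =
      MvPolynomial.bind₁ (fun j : Fin n =>
        if (j : ℕ) < h then MvPolynomial.C (p : ℤ) * MvPolynomial.X j
        else MvPolynomial.X j) C) :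
    (∀ x : Fin n → ZMod p,
      MvPolynomial.eval x (C.map (Int.castRingHom (ZMod p))) = 0 →
      ∀ j : Fin n, (j : ℕ) < h → x j = 0) ∧
    Nat.card {x : Fin n → ZMod (p ^ k) |
        MvPolynomial.eval x (C.map (Int.castRingHom (ZMod (p ^ k)))) = 0}
      = p ^ (n - h) *
        Nat.card {x : Fin n → ZMod (p ^ (k - 1)) |
          MvPolynomial.eval x (D.map (Int.castRingHom (ZMod (p ^ (k - 1))))) = 0} := by
  have hzero : ∀ x : Fin n → ZMod p, eval x (C.map (Int.castRingHom (ZMod p))) = 0 →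
      ∀ j : Fin n, (j : ℕ) < h → x j = 0 := fun x hx j hj =>
    apply_eq_zero_of_eval_eq_zero hvars
      (fun y hy => hnozero y fun j hj => hy j (Nat.not_lt.mpr hj)) hx hj
  refine ⟨hzero, ?_⟩
  obtain ⟨m, rfl⟩ : ∃ m, k = m + 1 := ⟨k - 1, by omega⟩
  have : NeZero p := ⟨hp.ne_zero⟩
  rw [Nat.add_sub_cancel, pow_succ']
  simp only [eval_map_intCastRingHom] at hzero ⊢
  have hcount := card_zeros_mul_pow_eq_pow_mul_card_zeros (fun j : Fin n => (j : ℕ) < h) hD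
    fun x hx j hj => by
      have hdvd : p ∣ p * p ^ m := dvd_mul_right p (p ^ m)
      rw [← ZMod.castHom_eq_zero_iff_dvd hdvd]
      exact hzero _ (by rw [← ringHom_aeval_int (ZMod.castHom hdvd _), hx, map_zero]) j hj
  rw [Fintype.card_fin_lt_of_le hhn.le, Fintype.card_fin] at hcount
  apply Nat.eq_of_mul_eq_mul_right (pow_pos hp.pos h)
  rw [hcount, mul_right_comm, ← pow_add, Nat.sub_add_cancel hhn.le]

/-- If `C` mod `p` depends only on `X_1, …, X_h` and this `h`-variable cubic form has
no non-trivial zero over `𝔽_p`, then every zero of `C` mod `p` has its first `h`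
coordinates zero, and `ρ(p^k) = p^{n-h} · ρ̃(p^{k-1})` where `ρ̃` counts zeros of
`C̃(X) = p⁻¹ C(pX_1, …, pX_h, X_{h+1}, …, X_n)`. -/
theorem stmt_8 (p n h k : ℕ) (hp : p.Prime) (hhn : h < n) (hk : 1 ≤ k)
    (C : MvPolynomial (Fin n) ℤ) (hC : C.IsHomogeneous 3)
    (hvars : ∀ j ∈ (C.map (Int.castRingHom (ZMod p))).vars, (j : ℕ) < h)
    (hnozero : ∀ y : Fin n → ZMod p, (∀ j : Fin n, h ≤ (j : ℕ) → y j = 0) →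
      MvPolynomial.eval y (C.map (Int.castRingHom (ZMod p))) = 0 → y = 0)
    (D : MvPolynomial (Fin n) ℤ)
    (hD : MvPolynomial.C (p : ℤ) * D =
      MvPolynomial.bind₁ (fun j : Fin n =>
        if (j : ℕ) < h then MvPolynomial.C (p : ℤ) * MvPolynomial.X j
        else MvPolynomial.X j) C) :
    (∀ x : Fin n → ZMod p,
      MvPolynomial.eval x (C.map (Int.castRingHom (ZMod p))) = 0 →
      ∀ j : Fin n, (j : ℕ) < h → x j = 0) ∧
    Nat.card {x : Fin n → ZMod (p ^ k) |
        MvPolynomial.eval x (C.map (Int.castRingHom (ZMod (p ^ k)))) = 0}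
      = p ^ (n - h) *
        Nat.card {x : Fin n → ZMod (p ^ (k - 1)) |
          MvPolynomial.eval x (D.map (Int.castRingHom (ZMod (p ^ (k - 1))))) = 0} :=
  stmt_8_general p n h k hp hhn hk C hvars hnozero D hD
end
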